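/- Let N > 0 and let G : (−N, N) → ℝ be defined by G(b) = −(2/3)b³ + N b² for 0 ≤ b < N and G(b) = −(1/3)b³ + N b² for −N < b ≤ 0. Then G is not three times differentiable at b = 0: the third derivative of G from the right at 0 equals −4 while the third derivative from the left at 0 equals −2. In particular G is C² but not C³ on (−N, N), hence not real analytic. -/

import Mathlib

/-- The piecewise function `G(b) = -(2/3)b³ + Nb²` for `b ≥ 0` and
`G(b) = -(1/3)b³ + Nb²` for `b < 0` (the KL divergence of the minimal
one-parameter ReLU example). -/
noncomputable def Gfun (N : ℝ) : ℝ → ℝ := fun b =>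
  if 0 ≤ b then -(2 / 3) * b ^ 3 + N * b ^ 2 else -(1 / 3) * b ^ 3 + N * b ^ 2

noncomputable def D1 (N : ℝ) : ℝ → ℝ := fun b =>
  if 0 ≤ b then -2 * b ^ 2 + 2 * N * b else -1 * b ^ 2 + 2 * N * b

noncomputable def D2 (N : ℝ) : ℝ → ℝ := fun b =>
  if 0 ≤ b then -4 * b + 2 * N else -2 * b + 2 * N

lemma hasDerivAt_poly1 (N b : ℝ) :
    HasDerivAt (fun x : ℝ => -(2/3) * x ^ 3 + N * x ^ 2) (-2 * b ^ 2 + 2 * N * b) b := by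
  have h := ((hasDerivAt_pow 3 b).const_mul (-(2/3):ℝ)).add ((hasDerivAt_pow 2 b).const_mul N)
  exact h.congr_deriv (by push_cast; ring)

lemma hasDerivAt_poly2 (N b : ℝ) :
    HasDerivAt (fun x : ℝ => -(1/3) * x ^ 3 + N * x ^ 2) (-1 * b ^ 2 + 2 * N * b) b := by
  have h := ((hasDerivAt_pow 3 b).const_mul (-(1/3):ℝ)).add ((hasDerivAt_pow 2 b).const_mul N)
  exact h.congr_deriv (by push_cast; ring)

lemma hasDerivAt_q1 (N b : ℝ) :
    HasDerivAt (fun x : ℝ => -2 * x ^ 2 + 2 * N * x) (-4 * b + 2 * N) b := by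
  have h := ((hasDerivAt_pow 2 b).const_mul (-2:ℝ)).add
    ((hasDerivAt_id' (𝕜 := ℝ) b).const_mul (2 * N))
  exact h.congr_deriv (by push_cast; ring)

lemma hasDerivAt_q2 (N b : ℝ) :
    HasDerivAt (fun x : ℝ => -1 * x ^ 2 + 2 * N * x) (-2 * b + 2 * N) b := by
  have h := ((hasDerivAt_pow 2 b).const_mul (-1:ℝ)).add
    ((hasDerivAt_id' (𝕜 := ℝ) b).const_mul (2 * N))
  exact h.congr_deriv (by push_cast; ring)

lemma Gfun_hasDerivAt (N b : ℝ) : HasDerivAt (Gfun N) (D1 N b) b := by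
  rcases lt_trichotomy b 0 with h | h | h
  · have hb : D1 N b = -1 * b ^ 2 + 2 * N * b := by simp [D1, not_le.mpr h]
    rw [hb]
    apply (hasDerivAt_poly2 N b).congr_of_eventuallyEq
    filter_upwards [Iio_mem_nhds h] with x hx
    simp [Gfun, not_le.mpr (Set.mem_Iio.mp hx)]
  · subst h
    have h1 : HasDerivWithinAt (Gfun N) 0 (Set.Ici 0) 0 := by
      have h' : HasDerivWithinAt (fun x : ℝ => -(2/3) * x ^ 3 + N * x ^ 2) 0 (Set.Ici 0) 0 := by
        have := (hasDerivAt_poly1 N 0).hasDerivWithinAt (s := Set.Ici 0)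
        exact this.congr_deriv (by ring)
      exact h'.congr (fun x hx => by simp [Gfun, Set.mem_Ici.mp hx]) (by simp [Gfun])
    have h2 : HasDerivWithinAt (Gfun N) 0 (Set.Iic 0) 0 := by
      have h' : HasDerivWithinAt (fun x : ℝ => -(1/3) * x ^ 3 + N * x ^ 2) 0 (Set.Iic 0) 0 := by
        have := (hasDerivAt_poly2 N 0).hasDerivWithinAt (s := Set.Iic 0)
        exact this.congr_deriv (by ring)
      refine h'.congr (fun x hx => ?_) (by simp [Gfun])
      rcases lt_or_eq_of_le (Set.mem_Iic.mp hx) with h | h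
      · simp [Gfun, not_le.mpr h]
      · subst h; simp [Gfun]
    have := h2.union h1
    rw [Set.Iic_union_Ici, hasDerivWithinAt_univ] at this
    simpa [D1] using this
  · have hb : D1 N b = -2 * b ^ 2 + 2 * N * b := by simp [D1, le_of_lt h]
    rw [hb]
    apply (hasDerivAt_poly1 N b).congr_of_eventuallyEq
    filter_upwards [Ioi_mem_nhds h] with x hx
    simp [Gfun, le_of_lt (Set.mem_Ioi.mp hx)]

lemma deriv_Gfun (N : ℝ) : deriv (Gfun N) = D1 N := by
  funext b; exact (Gfun_hasDerivAt N b).deriv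

lemma D1_hasDerivAt (N b : ℝ) : HasDerivAt (D1 N) (D2 N b) b := by
  rcases lt_trichotomy b 0 with h | h | h
  · have hb : D2 N b = -2 * b + 2 * N := by simp [D2, not_le.mpr h]
    rw [hb]
    apply (hasDerivAt_q2 N b).congr_of_eventuallyEq
    filter_upwards [Iio_mem_nhds h] with x hx
    simp [D1, not_le.mpr (Set.mem_Iio.mp hx)]
  · subst h
    have h1 : HasDerivWithinAt (D1 N) (2 * N) (Set.Ici 0) 0 := by
      have h' : HasDerivWithinAt (fun x : ℝ => -2 * x ^ 2 + 2 * N * x) (2 * N) (Set.Ici 0) 0 := by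
        have := (hasDerivAt_q1 N 0).hasDerivWithinAt (s := Set.Ici 0)
        exact this.congr_deriv (by ring)
      exact h'.congr (fun x hx => by simp [D1, Set.mem_Ici.mp hx]) (by simp [D1])
    have h2 : HasDerivWithinAt (D1 N) (2 * N) (Set.Iic 0) 0 := by
      have h' : HasDerivWithinAt (fun x : ℝ => -1 * x ^ 2 + 2 * N * x) (2 * N) (Set.Iic 0) 0 := by
        have := (hasDerivAt_q2 N 0).hasDerivWithinAt (s := Set.Iic 0)
        exact this.congr_deriv (by ring)
      refine h'.congr (fun x hx => ?_) (by simp [D1])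
      rcases lt_or_eq_of_le (Set.mem_Iic.mp hx) with h | h
      · simp [D1, not_le.mpr h]
      · subst h; simp [D1]
    have := h2.union h1
    rw [Set.Iic_union_Ici, hasDerivWithinAt_univ] at this
    simpa [D2] using this
  · have hb : D2 N b = -4 * b + 2 * N := by simp [D2, le_of_lt h]
    rw [hb]
    apply (hasDerivAt_q1 N b).congr_of_eventuallyEq
    filter_upwards [Ioi_mem_nhds h] with x hx
    simp [D1, le_of_lt (Set.mem_Ioi.mp hx)]

lemma deriv_D1 (N : ℝ) : deriv (D1 N) = D2 N := by
  funext b; exact (D1_hasDerivAt N b).deriv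

lemma deriv2_Gfun (N : ℝ) : deriv (deriv (Gfun N)) = D2 N := by
  rw [deriv_Gfun, deriv_D1]

lemma D2_right (N : ℝ) : HasDerivWithinAt (D2 N) (-4) (Set.Ici 0) 0 := by
  have h : HasDerivAt (fun x : ℝ => -4 * x + 2 * N) (-4) 0 := by
    have := ((hasDerivAt_id' (𝕜 := ℝ) 0).const_mul (-4:ℝ)).add_const (2 * N)
    simpa using this
  exact (h.hasDerivWithinAt.congr (fun x hx => by simp [D2, Set.mem_Ici.mp hx]) (by simp [D2]))

lemma D2_left (N : ℝ) : HasDerivWithinAt (D2 N) (-2) (Set.Iic 0) 0 := by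
  have h : HasDerivAt (fun x : ℝ => -2 * x + 2 * N) (-2) 0 := by
    have := ((hasDerivAt_id' (𝕜 := ℝ) 0).const_mul (-2:ℝ)).add_const (2 * N)
    simpa using this
  refine (h.hasDerivWithinAt.congr (fun x hx => ?_) (by simp [D2]))
  rcases lt_or_eq_of_le (Set.mem_Iic.mp hx) with h | h
  · simp [D2, not_le.mpr h]
  · subst h; simp [D2]

/-- `G` is not three times differentiable at `0`: the derivative of `G″` from the
right at `0` is `-4` while from the left it is `-2`; in particular `G` is `C²` but
not `C³` on `(-N, N)`, hence not real analytic at `0`. -/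
theorem Gfun_not_three_times_differentiable (N : ℝ) (hN : 0 < N) :
    HasDerivWithinAt (deriv (deriv (Gfun N))) (-4) (Set.Ici 0) 0 ∧
    HasDerivWithinAt (deriv (deriv (Gfun N))) (-2) (Set.Iic 0) 0 ∧
    ¬ DifferentiableAt ℝ (deriv (deriv (Gfun N))) 0 ∧
    ContDiffOn ℝ 2 (Gfun N) (Set.Ioo (-N) N) ∧
    ¬ ContDiffOn ℝ 3 (Gfun N) (Set.Ioo (-N) N) ∧
    ¬ AnalyticAt ℝ (Gfun N) 0 := by
  have hD2ndiff : ¬ DifferentiableAt ℝ (D2 N) 0 := by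
    intro h
    have hd := h.hasDerivAt
    have h4 : deriv (D2 N) 0 = -4 :=
      (uniqueDiffOn_Ici (0:ℝ) 0 Set.self_mem_Ici).eq_deriv _ hd.hasDerivWithinAt (D2_right N)
    have h2 : deriv (D2 N) 0 = -2 :=
      (uniqueDiffOn_Iic (0:ℝ) 0 Set.self_mem_Iic).eq_deriv _ hd.hasDerivWithinAt (D2_left N)
    rw [h4] at h2; norm_num at h2
  have hC2 : ContDiff ℝ 2 (Gfun N) := by
    rw [show (2 : WithTop ℕ∞) = 1 + 1 from rfl, contDiff_succ_iff_deriv]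
    refine ⟨fun b => (Gfun_hasDerivAt N b).differentiableAt, by simp, ?_⟩
    rw [deriv_Gfun, contDiff_one_iff_deriv]
    refine ⟨fun b => (D1_hasDerivAt N b).differentiableAt, ?_⟩
    rw [deriv_D1]
    show Continuous (D2 N)
    unfold D2
    apply Continuous.if_le (by fun_prop) (by fun_prop) continuous_const continuous_id
    intro x hx; subst hx; norm_num
  refine ⟨?_, ?_, ?_, hC2.contDiffOn, ?_, ?_⟩
  · rw [deriv2_Gfun]; exact D2_right N
  · rw [deriv2_Gfun]; exact D2_left N
  · rw [deriv2_Gfun]; exact hD2ndiff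
  · intro h
    have hopen : IsOpen (Set.Ioo (-N) N) := isOpen_Ioo
    have h0 : (0:ℝ) ∈ Set.Ioo (-N) N := by constructor <;> linarith
    have h3 : ContDiffOn ℝ (2 + 1) (Gfun N) (Set.Ioo (-N) N) := by exact_mod_cast h
    rw [contDiffOn_succ_iff_deriv_of_isOpen hopen] at h3
    have h2 : ContDiffOn ℝ (1 + 1) (deriv (Gfun N)) (Set.Ioo (-N) N) := by exact_mod_cast h3.2.2
    rw [contDiffOn_succ_iff_deriv_of_isOpen hopen] at h2
    have hd := h2.2.2.differentiableOn (by norm_num)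
    have := hd.differentiableAt (hopen.mem_nhds h0)
    rw [deriv2_Gfun] at this
    exact hD2ndiff this
  · intro h
    obtain ⟨u, hus, huo, h0u⟩ := eventually_nhds_iff.mp h.eventually_analyticAt
    have hu : AnalyticOnNhd ℝ (Gfun N) u := fun x hx => hus x hx
    have := ((hu.deriv.deriv) 0 h0u).differentiableAt
    rw [deriv2_Gfun] at this
    exact hD2ndiff this
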